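/- Let F be a positive CNF formula with k ≥ 1 variables and n ≥ 1 clauses (each clause a nonempty subset of the variables). Then in the graph G'_F, every vertex not belonging to the copy of H_6 and different from r_2 is at distance at most 3 from the vertex u_7; moreover, if k is odd, the distance from r_2 to u_7 equals 4. -/
import Mathlib


namespace CDG

/-- Vertices of the graph `B`. -/
inductive BVert : Type
  | a | e | b | b' | h | k | f1 | g1 | f2 | g2

/-- The edges of the graph `B`. -/
def BRel : BVert → BVert → Prop
  | .a, .e => True
  | .e, .b => True
  | .b, .b' => True
  | .a, .h => True
  | .h, .e => True
  | .e, .f1 => True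
  | .f1, .b => True
  | .b, .f2 => True
  | .f2, .e => True
  | .e, .g1 => True
  | .g1, .f1 => True
  | .e, .g2 => True
  | .g2, .f2 => True
  | .h, .k => True
  | .k, .a => True
  | _, _ => False

/-- The graph `B`. -/
def graphB : SimpleGraph BVert := SimpleGraph.fromRel BRel

/-- `S` is a connected dominating set of `G`: every vertex is in `S` or adjacent to a
vertex of `S`, and the subgraph induced by `S` is connected. -/
def IsConnDomSet {V : Type*} (G : SimpleGraph V) (S : Set V) : Prop :=
  (∀ v : V, v ∈ S ∨ ∃ u ∈ S, G.Adj u v) ∧ (G.induce S).Connected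

/-- The connected domination number of `G`. -/
noncomputable def connDomNum {V : Type*} (G : SimpleGraph V) : ℕ :=
  sInf {m | ∃ S : Set V, IsConnDomSet G S ∧ S.ncard = m}

/-- Vertices of the graph `H n`: `u i` is `u_i` for `0 ≤ i ≤ n+1`, `x t` is `x_{t+1}` and
`y t` is `y_{t+1}` for `0 ≤ t ≤ n-2`. -/
inductive HVert (n : ℕ) : Type
  | u : Fin (n + 2) → HVert n
  | x : Fin (n - 1) → HVert n
  | y : Fin (n - 1) → HVert n

/-- The edges of the graph `H n`. -/
def HRel (n : ℕ) : HVert n → HVert n → Prop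
  | .u i, .u j => (j : ℕ) = (i : ℕ) + 1
  | .u i, .x t => (i : ℕ) = (t : ℕ) + 1 ∨ (i : ℕ) = (t : ℕ) + 2
  | .x t, .y s => t = s
  | .y s, .u i => (i : ℕ) = (s : ℕ) + 2
  | _, _ => False

/-- The graph `H n`. -/
def graphH (n : ℕ) : SimpleGraph (HVert n) := SimpleGraph.fromRel (HRel n)

/-- Vertices of the graph `C m`: `cc i` is `c^{i+1}` and `dd i` is `d^{i+1}` for `0 ≤ i ≤ m-1`. -/
inductive CVert (m : ℕ) : Type
  | c : CVert m
  | d : CVert m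
  | cc : Fin m → CVert m
  | dd : Fin m → CVert m

/-- The edges of the graph `C m`. -/
def CRel (m : ℕ) : CVert m → CVert m → Prop
  | .c, .d => True
  | .c, .dd _ => True
  | .cc i, .dd j => i = j
  | _, _ => False

/-- The graph `C m`. -/
def graphC (m : ℕ) : SimpleGraph (CVert m) := SimpleGraph.fromRel (CRel m)

/-- Vertices of the graph `A`. -/
inductive AVert : Type
  | p1 | p2 | p3 | q1 | q2 | r1 | r2

/-- The edges of the graph `A`. -/
def ARel : AVert → AVert → Prop
  | .p1, .p2 => True
  | .p2, .p3 => True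
  | .p1, .q1 => True
  | .q1, .r1 => True
  | .p2, .q1 => True
  | .p2, .r1 => True
  | .p2, .q2 => True
  | .q2, .r2 => True
  | .p3, .q2 => True
  | .p3, .r2 => True
  | _, _ => False

/-- Vertices of the graph `G_F`, for a formula with `k` variables and `n` clauses:
`k` copies of `B`, `n` copies of `C n`, one copy of `H (2n+7)`, and a copy of `A`
exactly when `k` is odd (realized as `AVert × Fin (k % 2)`). -/
abbrev GVert (k n : ℕ) : Type :=
  (Fin k × BVert) ⊕ (Fin n × CVert n) ⊕ HVert (2 * n + 7) ⊕ (AVert × Fin (k % 2))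

/-- The edges of the graph `G_F`, where the formula `F` assigns to each clause `j`
the (nonempty) set of variables appearing in it. -/
def GRel (k n : ℕ) (F : Fin n → Finset (Fin k)) : GVert k n → GVert k n → Prop
  | .inl (i, v), .inl (i', w) => i = i' ∧ BRel v w
  | .inr (.inl (j, v)), .inr (.inl (j', w)) => j = j' ∧ CRel n v w
  | .inr (.inr (.inl v)), .inr (.inr (.inl w)) => HRel (2 * n + 7) v w
  | .inr (.inr (.inr (v, _))), .inr (.inr (.inr (w, _))) => ARel v w
  | .inr (.inl (j, v)), .inl (i, w) =>
      i ∈ F j ∧ w = .a ∧ (v = .c ∨ ∃ t, v = .cc t)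
  | .inr (.inr (.inl v)), .inl (i, w) =>
      v = .u ⟨0, by omega⟩ ∧ (w = .a ∨ w = .b)
  | .inr (.inr (.inr (v, _))), .inr (.inr (.inl w)) =>
      v = .p1 ∧ w = .u ⟨0, by omega⟩
  | _, _ => False

/-- The graph `G_F`. -/
def graphGF (k n : ℕ) (F : Fin n → Finset (Fin k)) : SimpleGraph (GVert k n) :=
  SimpleGraph.fromRel (GRel k n F)

/-- Vertices of the graph `G'_F`, for a formula with `k` variables and `n` clauses:
`k` copies of `B`, `n` copies of `C n`, one copy of `H 6`, and a copy of `A`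
exactly when `k` is odd (realized as `AVert × Fin (k % 2)`). -/
abbrev GVert' (k n : ℕ) : Type :=
  (Fin k × BVert) ⊕ (Fin n × CVert n) ⊕ HVert 6 ⊕ (AVert × Fin (k % 2))

/-- The edges of the graph `G'_F`. -/
def GRel' (k n : ℕ) (F : Fin n → Finset (Fin k)) : GVert' k n → GVert' k n → Prop
  | .inl (i, v), .inl (i', w) => i = i' ∧ BRel v w
  | .inr (.inl (j, v)), .inr (.inl (j', w)) => j = j' ∧ CRel n v w
  | .inr (.inr (.inl v)), .inr (.inr (.inl w)) => HRel 6 v w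
  | .inr (.inr (.inr (v, _))), .inr (.inr (.inr (w, _))) => ARel v w
  | .inr (.inl (j, v)), .inl (i, w) =>
      i ∈ F j ∧ w = .a ∧ (v = .c ∨ ∃ t, v = .cc t)
  | .inr (.inr (.inl v)), .inl (i, w) =>
      v = .u ⟨7, by omega⟩ ∧ (w = .a ∨ w = .b)
  | .inr (.inr (.inr (v, _))), .inr (.inr (.inl w)) =>
      v = .p1 ∧ w = .u ⟨7, by omega⟩
  | _, _ => False

/-- The graph `G'_F`. -/
def graphGF' (k n : ℕ) (F : Fin n → Finset (Fin k)) : SimpleGraph (GVert' k n) :=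
  SimpleGraph.fromRel (GRel' k n F)

/-- Potential on the copy of `A`. -/
def phiA : AVert → ℕ
  | .p1 => 1
  | .p2 => 2
  | .q1 => 2
  | .r1 => 2
  | .p3 => 3
  | .q2 => 3
  | .r2 => 4

/-- Potential function for the distance lower bound. -/
def phi {k n : ℕ} : GVert' k n → ℕ
  | .inl _ => 0
  | .inr (.inl _) => 0
  | .inr (.inr (.inl _)) => 0
  | .inr (.inr (.inr (a, _))) => phiA a

lemma phi_lip {k n : ℕ} {F : Fin n → Finset (Fin k)} {v w : GVert' k n}
    (h : GRel' k n F v w) : phi w ≤ phi v + 1 ∧ phi v ≤ phi w + 1 := by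
  rcases v with ⟨i, b⟩ | ⟨⟨j, c⟩ | hv | ⟨a, t⟩⟩ <;>
    rcases w with ⟨i', b'⟩ | ⟨⟨j', c'⟩ | hw | ⟨a', t'⟩⟩ <;>
    first
      | exact False.elim h
      | (obtain ⟨rfl, rfl⟩ := h; exact ⟨by simp [phi, phiA], by simp [phi, phiA]⟩)
      | (cases a <;> cases a' <;>
          first
            | exact False.elim h
            | exact ⟨by simp [phi, phiA], by simp [phi, phiA]⟩)
      | simp [phi]

lemma phi_walk {k n : ℕ} {F : Fin n → Finset (Fin k)} {v w : GVert' k n}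
    (p : (graphGF' k n F).Walk v w) : phi v ≤ phi w + p.length := by
  induction p with
  | nil => simp
  | @cons x y z h q ih =>
    have h2 : phi (k := k) (n := n) x ≤ phi y + 1 := by
      obtain ⟨-, h | h⟩ := h
      · exact (phi_lip (F := F) h).2
      · exact (phi_lip (F := F) h).1
    simp only [SimpleGraph.Walk.length_cons]
    omega

lemma adj_of {k n : ℕ} {F : Fin n → Finset (Fin k)} {v w : GVert' k n}
    (h : GRel' k n F v w) (hne : v ≠ w) : (graphGF' k n F).Adj v w :=
  ⟨hne, Or.inl h⟩

theorem graphGF'_distances_to_u7 (k n : ℕ) (hk : 1 ≤ k) (hn : 1 ≤ n)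
    (F : Fin n → Finset (Fin k)) (hF : ∀ j, (F j).Nonempty) :
    (∀ v : GVert' k n,
      (∀ w : HVert 6, v ≠ .inr (.inr (.inl w))) →
      (∀ t : Fin (k % 2), v ≠ .inr (.inr (.inr (.r2, t)))) →
      (graphGF' k n F).dist v (.inr (.inr (.inl (.u ⟨7, by omega⟩)))) ≤ 3) ∧
    (Odd k → ∀ t : Fin (k % 2),
      (graphGF' k n F).dist (.inr (.inr (.inr (.r2, t))))
        (.inr (.inr (.inl (.u ⟨7, by omega⟩)))) = 4) := by
  set G := graphGF' k n F with hG
  set u7 : GVert' k n := .inr (.inr (.inl (.u ⟨7, by omega⟩))) with hu7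
  -- adjacency facts
  have adj1 : ∀ {v w : GVert' k n}, GRel' k n F v w → v ≠ w → G.Adj v w :=
    fun h hne => ⟨hne, Or.inl h⟩
  have adj2 : ∀ {v w : GVert' k n}, GRel' k n F w v → v ≠ w → G.Adj v w :=
    fun h hne => ⟨hne, Or.inr h⟩
  have ha : ∀ i : Fin k, G.Adj (.inl (i, .a)) u7 :=
    fun i => adj2 ⟨rfl, Or.inl rfl⟩ (by simp [hu7])
  have hb : ∀ i : Fin k, G.Adj (.inl (i, .b)) u7 :=
    fun i => adj2 ⟨rfl, Or.inr rfl⟩ (by simp [hu7])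
  have hB : ∀ (i : Fin k) (x y : BVert), BRel x y → x ≠ y →
      G.Adj (.inl (i, x)) (.inl (i, y)) :=
    fun i x y h hne => adj1 ⟨rfl, h⟩ (by simp [hne])
  constructor
  · rintro (⟨i, b⟩ | ⟨⟨j, c⟩ | hv | ⟨a, t⟩⟩) hH hA
    · -- copies of B
      cases b with
      | a => exact le_trans (SimpleGraph.dist_le (.cons (ha i) .nil)) (by simp)
      | b => exact le_trans (SimpleGraph.dist_le (.cons (hb i) .nil)) (by simp)
      | e => exact le_trans (SimpleGraph.dist_le
          (.cons (hB i .a .e trivial (by simp)).symm (.cons (ha i) .nil))) (by simp)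
      | b' => exact le_trans (SimpleGraph.dist_le
          (.cons (hB i .b .b' trivial (by simp)).symm (.cons (hb i) .nil))) (by simp)
      | h => exact le_trans (SimpleGraph.dist_le
          (.cons (hB i .a .h trivial (by simp)).symm (.cons (ha i) .nil))) (by simp)
      | k => exact le_trans (SimpleGraph.dist_le
          (.cons (hB i .k .a trivial (by simp)) (.cons (ha i) .nil))) (by simp)
      | f1 => exact le_trans (SimpleGraph.dist_le
          (.cons (hB i .f1 .b trivial (by simp)) (.cons (hb i) .nil))) (by simp)
      | f2 => exact le_trans (SimpleGraph.dist_le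
          (.cons (hB i .b .f2 trivial (by simp)).symm (.cons (hb i) .nil))) (by simp)
      | g1 => exact le_trans (SimpleGraph.dist_le
          (.cons (hB i .g1 .f1 trivial (by simp)) (.cons (hB i .f1 .b trivial (by simp))
            (.cons (hb i) .nil)))) (by simp)
      | g2 => exact le_trans (SimpleGraph.dist_le
          (.cons (hB i .g2 .f2 trivial (by simp)) (.cons (hB i .b .f2 trivial (by simp)).symm
            (.cons (hb i) .nil)))) (by simp)
    · -- copies of C
      obtain ⟨i, hi⟩ := hF j
      have hca : G.Adj (.inr (.inl (j, .c))) (.inl (i, .a)) :=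
        adj1 (show GRel' k n F (.inr (.inl (j, .c))) (.inl (i, .a)) from
          ⟨hi, rfl, Or.inl rfl⟩) (by simp)
      cases c with
      | c => exact le_trans (SimpleGraph.dist_le (.cons hca (.cons (ha i) .nil))) (by simp)
      | d => exact le_trans (SimpleGraph.dist_le
          ((SimpleGraph.Walk.cons
            (adj2 (show GRel' k n F (.inr (.inl (j, .c))) (.inr (.inl (j, .d))) from
              ⟨rfl, trivial⟩) (by simp))
            (.cons hca (.cons (ha i) .nil))))) (by simp)
      | cc t =>
        have : G.Adj (.inr (.inl (j, .cc t))) (.inl (i, .a)) :=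
          adj1 (show GRel' k n F (.inr (.inl (j, .cc t))) (.inl (i, .a)) from
            ⟨hi, rfl, Or.inr ⟨t, rfl⟩⟩) (by simp)
        exact le_trans (SimpleGraph.dist_le (.cons this (.cons (ha i) .nil))) (by simp)
      | dd t => exact le_trans (SimpleGraph.dist_le
          ((SimpleGraph.Walk.cons
            (adj2 (show GRel' k n F (.inr (.inl (j, .c))) (.inr (.inl (j, .dd t))) from
              ⟨rfl, trivial⟩) (by simp))
            (.cons hca (.cons (ha i) .nil))))) (by simp)
    · exact absurd rfl (hH hv)
    · -- copy of A
      have hp1 : G.Adj (.inr (.inr (.inr (.p1, t)))) u7 :=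
        adj1 (show GRel' k n F (.inr (.inr (.inr (.p1, t)))) u7 from ⟨rfl, rfl⟩)
          (by simp [hu7])
      have hAA : ∀ x y : AVert, ARel x y → x ≠ y →
          G.Adj (.inr (.inr (.inr (x, t)))) (.inr (.inr (.inr (y, t)))) :=
        fun x y h hne => adj1 h (by simp [hne])
      cases a with
      | p1 => exact le_trans (SimpleGraph.dist_le (.cons hp1 .nil)) (by simp)
      | p2 => exact le_trans (SimpleGraph.dist_le
          (.cons (hAA .p1 .p2 trivial (by simp)).symm (.cons hp1 .nil))) (by simp)
      | p3 => exact le_trans (SimpleGraph.dist_le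
          (.cons (hAA .p2 .p3 trivial (by simp)).symm
            (.cons (hAA .p1 .p2 trivial (by simp)).symm (.cons hp1 .nil)))) (by simp)
      | q1 => exact le_trans (SimpleGraph.dist_le
          (.cons (hAA .p1 .q1 trivial (by simp)).symm (.cons hp1 .nil))) (by simp)
      | q2 => exact le_trans (SimpleGraph.dist_le
          (.cons (hAA .p2 .q2 trivial (by simp)).symm
            (.cons (hAA .p1 .p2 trivial (by simp)).symm (.cons hp1 .nil)))) (by simp)
      | r1 => exact le_trans (SimpleGraph.dist_le
          (.cons (hAA .p2 .r1 trivial (by simp)).symm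
            (.cons (hAA .p1 .p2 trivial (by simp)).symm (.cons hp1 .nil)))) (by simp)
      | r2 => exact absurd rfl (hA t)
  · intro hodd t
    have hp1 : G.Adj (.inr (.inr (.inr (.p1, t)))) u7 :=
      adj1 (show GRel' k n F (.inr (.inr (.inr (.p1, t)))) u7 from ⟨rfl, rfl⟩)
        (by simp [hu7])
    have hAA : ∀ x y : AVert, ARel x y → x ≠ y →
        G.Adj (.inr (.inr (.inr (x, t)))) (.inr (.inr (.inr (y, t)))) :=
      fun x y h hne => adj1 h (by simp [hne])
    have hle : G.dist (.inr (.inr (.inr (.r2, t)))) u7 ≤ 4 :=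
      le_trans (SimpleGraph.dist_le
        (.cons (hAA .q2 .r2 trivial (by simp)).symm
          (.cons (hAA .p2 .q2 trivial (by simp)).symm
            (.cons (hAA .p1 .p2 trivial (by simp)).symm (.cons hp1 .nil))))) (by simp)
    have hreach : G.Reachable (.inr (.inr (.inr (.r2, t)))) u7 :=
      ⟨.cons (hAA .q2 .r2 trivial (by simp)).symm
        (.cons (hAA .p2 .q2 trivial (by simp)).symm
          (.cons (hAA .p1 .p2 trivial (by simp)).symm (.cons hp1 .nil)))⟩
    obtain ⟨p, hp⟩ := hreach.exists_walk_length_eq_dist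
    have hlow := phi_walk (F := F) p
    have h1 : phi (k := k) (n := n) (.inr (.inr (.inr (.r2, t)))) = 4 := rfl
    have h2 : phi (k := k) (n := n) u7 = 0 := rfl
    rw [h1, h2, hp] at hlow
    omega

end CDG
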